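/- arXiv:1711.01052 — 7 statements merged into one kernel-verified Lean document; each statement's English description precedes it below -/
import Mathlib

section
/- Let A be a separable C*-algebra and let D ⊆ A be an abelian closed *-subalgebra containing an approximate unit for A and such that for every character φ of D the quotient D'/J_φ is unital. Then the following are equivalent: (a) for each character φ of D there exist d ∈ D and an open neighbourhood U of φ in the character space D̂ such that d + J_ψ is the unit of D'/J_ψ for all ψ ∈ U; (b) for each character φ of D and each d ∈ D, one has d + J_φ = φ(d)·1_{D'/J_φ}. -/
open WeakDual Filter Topology Classical

variable {A : Type} [NonUnitalNormedRing A] [StarRing A] [CStarRing A]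
  [NormedSpace ℂ A] [IsScalarTower ℂ A A] [SMulCommClass ℂ A A] [CompleteSpace A] [StarModule ℂ A]

/-- Evaluation of a character of `D` at an element of `A` (taken to be `0` off `D`). -/
noncomputable def evalD (D : NonUnitalStarSubalgebra ℂ A) (φ : characterSpace ℂ D) (a : A) : ℂ :=
  if h : a ∈ D then φ (⟨a, h⟩ : D) else 0

/-- The open support `supp°(a) = {φ ∈ D̂ : φ(a) ≠ 0}`. -/
def suppo (D : NonUnitalStarSubalgebra ℂ A) (a : A) : Set (characterSpace ℂ D) :=
  {φ | evalD D φ a ≠ 0}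

/-- `n` is a normaliser of `D` in `A`. -/
def IsNormalizer (D : NonUnitalStarSubalgebra ℂ A) (n : A) : Prop :=
  ∀ d ∈ D, n * d * star n ∈ D ∧ star n * d * n ∈ D

/-- `S` contains an approximate unit for `A`: there is a net in `S` converging
multiplicatively to the identity on every element of `A`. -/
def HasApproxUnit (S : Set A) : Prop :=
  ∃ (ι : Type) (l : Filter ι) (e : ι → A), l.NeBot ∧ (∀ i, e i ∈ S) ∧
    ∀ a : A, Tendsto (fun i => e i * a) l (nhds a) ∧ Tendsto (fun i => a * e i) l (nhds a)

/-- `α` is "the" homeomorphism `α_n : supp°(n*n) → supp°(nn*)` attached to a normaliser `n`,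
i.e. a partial homeomorphism of `D̂` with source `supp°(n*n)`, target `supp°(nn*)`, and
satisfying `φ(n*n)·(α_n φ)(d) = φ(n* d n)` for all `φ` in the source and `d ∈ D`. -/
def IsWeylHomeo (D : NonUnitalStarSubalgebra ℂ A) (n : A)
    (α : PartialHomeomorph (characterSpace ℂ D) (characterSpace ℂ D)) : Prop :=
  α.source = suppo D (star n * n) ∧ α.target = suppo D (n * star n) ∧
  ∀ φ ∈ α.source, ∀ d ∈ D, evalD D φ (star n * n) * evalD D (α φ) d = evalD D φ (star n * d * n)

/-- The relative commutant `D' = {a ∈ A : a d = d a for all d ∈ D}`, as a set. -/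
def commutantSet (D : NonUnitalStarSubalgebra ℂ A) : Set A := {a | ∀ d ∈ D, a * d = d * a}

/-- The ideal `J_φ ⊆ D'`: the closure of `(ker φ)·D'`. -/
noncomputable def Jset (D : NonUnitalStarSubalgebra ℂ A) (φ : characterSpace ℂ D) : Set A :=
  closure ((Submodule.span ℂ {x : A | ∃ k ∈ (D : Set A), ∃ a ∈ commutantSet D,
    evalD D φ k = 0 ∧ x = k * a} : Submodule ℂ A) : Set A)

/-- `e ∈ D'` represents the unit of `D'/J_φ`. -/
def IsUnitModJ (D : NonUnitalStarSubalgebra ℂ A) (φ : characterSpace ℂ D) (e : A) : Prop :=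
  e ∈ commutantSet D ∧ ∀ a ∈ commutantSet D, e * a - a ∈ Jset D φ ∧ a * e - a ∈ Jset D φ

/-- `D` is a weakly Cartan subalgebra of `A`. -/
def IsWeaklyCartan (D : NonUnitalStarSubalgebra ℂ A) : Prop :=
  IsClosed (D : Set A) ∧ (∀ x ∈ D, ∀ y ∈ D, x * y = y * x) ∧ HasApproxUnit (D : Set A) ∧
  (∀ φ : characterSpace ℂ D, ∃ e, IsUnitModJ D φ e) ∧
  (∀ φ : characterSpace ℂ D, ∃ d ∈ D, ∃ U : Set (characterSpace ℂ D),
    IsOpen U ∧ φ ∈ U ∧ ∀ ψ ∈ U, IsUnitModJ D ψ d)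

/-- The relative commutant `D'` as a non-unital star subalgebra of `A`. -/
def commutantAlg (D : NonUnitalStarSubalgebra ℂ A) : NonUnitalStarSubalgebra ℂ A where
  carrier := commutantSet D
  add_mem' := by
    intro a b ha hb d hd
    simp only [commutantSet, Set.mem_setOf_eq] at *
    rw [add_mul, mul_add, ha d hd, hb d hd]
  zero_mem' := by
    intro d _
    rw [zero_mul, mul_zero]
  mul_mem' := by
    intro a b ha hb d hd
    calc a * b * d = a * (b * d) := by rw [mul_assoc]
      _ = a * (d * b) := by rw [hb d hd]
      _ = a * d * b := by rw [mul_assoc]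
      _ = d * a * b := by rw [ha d hd]
      _ = d * (a * b) := by rw [mul_assoc]
  smul_mem' := by
    intro c a ha d hd
    rw [smul_mul_assoc, ha d hd, mul_smul_comm]
  star_mem' := by
    intro a ha d hd
    calc star a * d = star (star d * a) := by rw [star_mul, star_star]
      _ = star (a * star d) := by rw [← ha (star d) (star_mem hd)]
      _ = d * star a := by rw [star_mul, star_star]

/-- `w` is a representative in `A` of the unitary `U^φ_{n*m}` of `D'/J_φ`:
`w = φ(m*m)^{-1/2}·φ(n*n)^{-1/2}·(d n* m d)` for some admissible `U` and `d`. -/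
noncomputable def WeylRep (D : NonUnitalStarSubalgebra ℂ A) (n m : A)
    (φ : characterSpace ℂ D) (w : A) : Prop :=
  ∃ U : Set (characterSpace ℂ D), IsOpen U ∧ φ ∈ U ∧
    U ⊆ suppo D (star n * n) ∩ suppo D (star m * m) ∧
    (∃ αn αm : PartialHomeomorph (characterSpace ℂ D) (characterSpace ℂ D),
       IsWeylHomeo D n αn ∧ IsWeylHomeo D m αm ∧ Set.EqOn ⇑αn ⇑αm U) ∧
    ∃ d ∈ (D : Set A), suppo D d ⊆ U ∧ evalD D φ d = 1 ∧
      w = (evalD D φ (star m * m) ^ (-(1/2) : ℂ) * evalD D φ (star n * n) ^ (-(1/2) : ℂ)) •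
        (d * (star n * m) * d)

/-- The unitary `U^φ_{n*m}` of `D'/J_φ` lies in the connected component of the identity of
the unitary group of `D'/J_φ`; the quotient `D'/J_φ` is represented by an arbitrary
surjective star-homomorphism `π` from `D'` onto a unital C*-algebra `Q` with kernel `J_φ`. -/
noncomputable def InU0 (D : NonUnitalStarSubalgebra ℂ A) (n m : A)
    (φ : characterSpace ℂ D) : Prop :=
  ∀ (Q : Type) [NormedRing Q] [StarRing Q] [CStarRing Q] [NormedAlgebra ℂ Q]
    [CompleteSpace Q] [StarModule ℂ Q] (π : commutantAlg D →⋆ₙₐ[ℂ] Q),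
    Function.Surjective ⇑π →
    (∀ a : commutantAlg D, π a = 0 ↔ (a : A) ∈ Jset D φ) →
    ∃ w : commutantAlg D, WeylRep D n m φ (w : A) ∧
      ∃ hu : π w ∈ unitary Q, (⟨π w, hu⟩ : unitary Q) ∈ connectedComponent (1 : unitary Q)

/-- The relation `(n, φ) ∼ (m, ψ)` of Lemma 4.7 (for the trivial coaction). -/
noncomputable def WeylSimRaw (D : NonUnitalStarSubalgebra ℂ A) (n : A)
    (φ : characterSpace ℂ D) (m : A) (ψ : characterSpace ℂ D) : Prop :=
  φ = ψ ∧
  (∃ U : Set (characterSpace ℂ D), IsOpen U ∧ φ ∈ U ∧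
    U ⊆ suppo D (star n * n) ∩ suppo D (star m * m) ∧
    ∃ αn αm : PartialHomeomorph (characterSpace ℂ D) (characterSpace ℂ D),
      IsWeylHomeo D n αn ∧ IsWeylHomeo D m αm ∧ Set.EqOn ⇑αn ⇑αm U) ∧
  InU0 D n m φ

/-- The set of pairs `(n, φ)` with `n ∈ N(D)` and `φ ∈ supp°(n*n)`. -/
def WeylPair (D : NonUnitalStarSubalgebra ℂ A) : Type :=
  {p : A × characterSpace ℂ D // IsNormalizer D p.1 ∧ p.2 ∈ suppo D (star p.1 * p.1)}

/-! (a) ⇒ (b) rests on `ker φ ⊆ J_φ`: with an approximate unit `(e_λ)` in `D ⊆ D'`, every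
`k ∈ ker φ` is the limit of `k e_λ ∈ (ker φ)·D'`. So if `d₀ ∈ D` is a unit modulo `J_φ`, then
modulo `J_φ` we get `d ≡ d d₀ ≡ φ(d) d₀ ≡ φ(d) e`, the middle step because `d d₀ - φ(d) d₀ ∈ ker φ`.
(b) ⇒ (a): functional calculus in the C*-algebra `D` gives `d ∈ D` with `ψ(d) = 1` for all `ψ`
near `φ`, and by (b) such a `d` agrees with the unit of `D'/J_ψ` modulo `J_ψ`. -/

namespace WeakDual.CharacterSpace

variable {B : Type*} [NonUnitalCStarAlgebra B]

/-- Mathlib has this only for unital `B`; a character extends to the unitization. -/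
instance instStarHomClassOfNonUnital : StarHomClass (characterSpace ℂ B) B ℂ where
  map_star ψ b := by
    let ψ' : Unitization ℂ B →ₐ[ℂ] ℂ := Unitization.lift (toNonUnitalAlgHom ψ)
    simpa [ψ'] using map_star (self := AlgHomClass.instStarHomClass) ψ' (b : Unitization ℂ B)

lemma exists_apply_eq_one_nhds (φ : characterSpace ℂ B) : ∃ b : B, ∀ᶠ ψ in 𝓝 φ, ψ b = 1 := by
  obtain ⟨x, hx⟩ : ∃ x : B, φ x = 1 := by
    obtain ⟨x₀, hx₀⟩ : ∃ x₀ : B, φ x₀ ≠ 0 := by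
      by_contra! h
      exact φ.prop.1 (DFunLike.ext _ _ h)
    exact ⟨(φ x₀)⁻¹ • x₀, by rw [map_smul, smul_eq_mul, inv_mul_cancel₀ hx₀]⟩
  set y := star x * x
  have hy : IsSelfAdjoint y := .star_mul_self x
  let f : ℝ → ℝ := fun t => min 1 (2 * t)
  have hf : ∀ t, 1 / 2 ≤ t → f t = 1 := fun t ht => min_eq_left (by linarith)
  have happly : ∀ ψ : characterSpace ℂ B, ψ (cfcₙ f y) = f (ψ y).re := by
    intro ψ
    have hψy : IsSelfAdjoint (ψ y) := hy.map ψ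
    rw [NonUnitalStarAlgHomClass.map_cfcₙ (S := ℂ) ψ f y (hφ := map_continuous ψ)]
    have hre : ψ y = algebraMap ℝ ℂ (ψ y).re := (Complex.conj_eq_iff_re.mp hψy).symm
    conv_lhs => rw [hre]
    rw [cfcₙ_eq_cfc, cfc_algebraMap]
    rfl
  have hU : IsOpen {ψ : characterSpace ℂ B | 1 / 2 < (ψ y).re} :=
    isOpen_lt continuous_const
      (Complex.continuous_re.comp ((eval_continuous y).comp continuous_subtype_val))
  have hφy : (φ y).re = 1 := by simp [y, hx, map_star]
  refine ⟨cfcₙ f y, Filter.mem_of_superset (hU.mem_nhds (by norm_num [hφy])) fun ψ hψ => ?_⟩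
  change ψ (cfcₙ f y) = 1
  rw [happly, hf _ hψ.le, Complex.ofReal_one]

end WeakDual.CharacterSpace

section NormedStarAlgebra

variable {E : Type} [NonUnitalNormedRing E]

lemma HasApproxUnit.mono {S T : Set E} (hST : S ⊆ T) (hS : HasApproxUnit S) :
    HasApproxUnit T := by
  obtain ⟨ι, l, e, hl, heS, he⟩ := hS
  exact ⟨ι, l, e, hl, fun i => hST (heS i), he⟩

variable [StarRing E] [NormedSpace ℂ E] {D : NonUnitalStarSubalgebra ℂ E} {φ : characterSpace ℂ D}

lemma subset_commutantSet (hD : ∀ x ∈ D, ∀ y ∈ D, x * y = y * x) :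
    (D : Set E) ⊆ commutantSet D :=
  fun a ha d hd => hD a ha d hd

lemma evalD_of_mem {a : E} (ha : a ∈ D) : evalD D φ a = φ ⟨a, ha⟩ :=
  dif_pos ha

namespace Jset

variable {x y : E}

variable (D φ) in
def generators : Set E :=
  {x : E | ∃ k ∈ (D : Set E), ∃ a ∈ commutantSet D, evalD D φ k = 0 ∧ x = k * a}

variable (D φ) in
lemma eq_topologicalClosure :
    Jset D φ = ((Submodule.span ℂ (generators D φ)).topologicalClosure : Set E) :=
  (Submodule.topologicalClosure_coe _).symm

lemma isClosed : IsClosed (Jset D φ) := isClosed_closure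

lemma add_mem (hx : x ∈ Jset D φ) (hy : y ∈ Jset D φ) : x + y ∈ Jset D φ := by
  rw [eq_topologicalClosure] at *
  exact AddMemClass.add_mem hx hy

lemma sub_mem (hx : x ∈ Jset D φ) (hy : y ∈ Jset D φ) : x - y ∈ Jset D φ := by
  rw [eq_topologicalClosure] at *
  exact Submodule.sub_mem _ hx hy

lemma smul_mem (c : ℂ) (hx : x ∈ Jset D φ) : c • x ∈ Jset D φ := by
  rw [eq_topologicalClosure] at *
  exact Submodule.smul_mem _ c hx

lemma mapsTo (f : E →L[ℂ] E) (hf : Set.MapsTo f (generators D φ) (generators D φ)) :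
    Set.MapsTo f (Jset D φ) (Jset D φ) := by
  have hspan : (Submodule.span ℂ (generators D φ)).map (f : E →ₗ[ℂ] E) ≤
      Submodule.span ℂ (generators D φ) :=
    Submodule.map_span_le _ _ _ |>.2 fun x hx => Submodule.subset_span (hf hx)
  exact fun x hx => map_mem_closure f.continuous hx fun z hz => hspan ⟨z, hz, rfl⟩

variable [IsScalarTower ℂ E E] [SMulCommClass ℂ E E] {a : E}

lemma mul_mem_left (ha : a ∈ commutantSet D) (hx : x ∈ Jset D φ) : a * x ∈ Jset D φ := by
  refine mapsTo (ContinuousLinearMap.mul ℂ E a) ?_ hx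
  rintro _ ⟨k, hk, b, hb, hφk, rfl⟩
  refine ⟨k, hk, a * b, (commutantAlg D).mul_mem ha hb, hφk, ?_⟩
  simp only [ContinuousLinearMap.mul_apply', ← mul_assoc, ha k hk]

lemma mul_mem_right (ha : a ∈ commutantSet D) (hx : x ∈ Jset D φ) : x * a ∈ Jset D φ := by
  refine mapsTo ((ContinuousLinearMap.mul ℂ E).flip a) ?_ hx
  rintro _ ⟨k, hk, b, hb, hφk, rfl⟩
  refine ⟨k, hk, b * a, (commutantAlg D).mul_mem hb ha, hφk, ?_⟩
  simp only [ContinuousLinearMap.flip_apply, ContinuousLinearMap.mul_apply', mul_assoc]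

end Jset

lemma mem_Jset_of_evalD_eq_zero (hD : HasApproxUnit (commutantSet D)) {k : E} (hk : k ∈ D)
    (hφk : evalD D φ k = 0) : k ∈ Jset D φ := by
  obtain ⟨ι, l, e, hl, he, htend⟩ := hD
  exact Jset.isClosed.mem_of_tendsto (htend k).2 <| .of_forall fun i =>
    subset_closure (Submodule.subset_span ⟨k, hk, e i, he i, hφk, rfl⟩)

namespace IsUnitModJ

variable {d e : E}

lemma sub_mem_Jset {e' : E} (he : IsUnitModJ D φ e) (he' : IsUnitModJ D φ e') :
    e - e' ∈ Jset D φ := by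
  convert Jset.sub_mem (he.2 e' he'.1).2 (he'.2 e he.1).1 using 1
  abel

lemma sub_evalD_smul_mem_Jset (hDD' : (D : Set E) ⊆ commutantSet D)
    (hD : HasApproxUnit (commutantSet D)) {d₀ : E} (hd₀ : d₀ ∈ D) (hu₀ : IsUnitModJ D φ d₀)
    (hd : d ∈ D) (he : IsUnitModJ D φ e) : d - evalD D φ d • e ∈ Jset D φ := by
  set c := evalD D φ d
  have hkD : d * d₀ - c • d₀ ∈ D := sub_mem (mul_mem hd hd₀) (SMulMemClass.smul_mem c hd₀)
  have hk : d * d₀ - c • d₀ ∈ Jset D φ := by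
    refine mem_Jset_of_evalD_eq_zero hD hkD ?_
    rw [evalD_of_mem hkD]
    change φ (⟨d, hd⟩ * ⟨d₀, hd₀⟩ - c • ⟨d₀, hd₀⟩) = 0
    rw [map_sub, map_mul, map_smul, smul_eq_mul, ← evalD_of_mem hd]
    ring
  convert Jset.add_mem (Jset.sub_mem hk (hu₀.2 d (hDD' hd)).2)
    (Jset.smul_mem c (hu₀.sub_mem_Jset he)) using 1
  simp only [smul_sub]
  abel

lemma of_sub_mem_Jset [IsScalarTower ℂ E E] [SMulCommClass ℂ E E] (he : IsUnitModJ D φ e)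
    (hd : d ∈ commutantSet D) (hde : d - e ∈ Jset D φ) : IsUnitModJ D φ d := by
  refine ⟨hd, fun a ha => ⟨?_, ?_⟩⟩
  · convert Jset.add_mem (Jset.mul_mem_right ha hde) (he.2 a ha).1 using 1
    noncomm_ring
  · convert Jset.add_mem (Jset.mul_mem_left ha hde) (he.2 a ha).2 using 1
    noncomm_ring

end IsUnitModJ

end NormedStarAlgebra

lemma exists_evalD_eq_one_nhds {D : NonUnitalStarSubalgebra ℂ A} (hD : IsClosed (D : Set A))
    (φ : characterSpace ℂ D) : ∃ d ∈ D, ∀ᶠ ψ in 𝓝 φ, evalD D ψ d = 1 := by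
  let _ : NonUnitalCStarAlgebra A := { }
  have : IsClosed (D : Set A) := hD
  obtain ⟨b, hb⟩ := CharacterSpace.exists_apply_eq_one_nhds φ
  exact ⟨b, b.2, hb.mono fun ψ hψ => by rwa [evalD_of_mem b.2]⟩

theorem statement_0_general
    (D : NonUnitalStarSubalgebra ℂ A) (hDclosed : IsClosed (D : Set A))
    (hDabelian : ∀ x ∈ D, ∀ y ∈ D, x * y = y * x)
    (hDapprox : HasApproxUnit (D : Set A))
    (hDunital : ∀ φ : characterSpace ℂ D, ∃ e, IsUnitModJ D φ e) :
    (∀ φ : characterSpace ℂ D, ∃ d ∈ D, ∃ U : Set (characterSpace ℂ D),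
        IsOpen U ∧ φ ∈ U ∧ ∀ ψ ∈ U, IsUnitModJ D ψ d) ↔
    (∀ φ : characterSpace ℂ D, ∀ d ∈ D, ∀ e : A, IsUnitModJ D φ e →
        d - evalD D φ d • e ∈ Jset D φ) := by
  have hDD' := subset_commutantSet hDabelian
  constructor
  · intro h φ d hd e he
    obtain ⟨d₀, hd₀, U, -, hφU, hU⟩ := h φ
    exact IsUnitModJ.sub_evalD_smul_mem_Jset hDD' (hDapprox.mono hDD') hd₀ (hU φ hφU) hd he
  · intro h φ
    obtain ⟨d, hd, hone⟩ := exists_evalD_eq_one_nhds hDclosed φ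
    obtain ⟨U, hU, hUopen, hφU⟩ := eventually_nhds_iff.1 hone
    refine ⟨d, hd, U, hUopen, hφU, fun ψ hψ => ?_⟩
    obtain ⟨e, he⟩ := hDunital ψ
    refine he.of_sub_mem_Jset (hDD' hd) ?_
    simpa [hU ψ hψ] using h ψ d hd e he

theorem statement_0 [TopologicalSpace.SeparableSpace A]
    (D : NonUnitalStarSubalgebra ℂ A) (hDclosed : IsClosed (D : Set A))
    (hDabelian : ∀ x ∈ D, ∀ y ∈ D, x * y = y * x)
    (hDapprox : HasApproxUnit (D : Set A))
    (hDunital : ∀ φ : characterSpace ℂ D, ∃ e, IsUnitModJ D φ e) :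
    (∀ φ : characterSpace ℂ D, ∃ d ∈ D, ∃ U : Set (characterSpace ℂ D),
        IsOpen U ∧ φ ∈ U ∧ ∀ ψ ∈ U, IsUnitModJ D ψ d) ↔
    (∀ φ : characterSpace ℂ D, ∀ d ∈ D, ∀ e : A, IsUnitModJ D φ e →
        d - evalD D φ d • e ∈ Jset D φ) :=
  statement_0_general D hDclosed hDabelian hDapprox hDunital
end

section
/- Let A be a C*-algebra and D ⊆ A an abelian closed *-subalgebra containing an approximate unit for A. If n ∈ A is a normaliser of D in A, then n*n ∈ D and nn* ∈ D. -/
open WeakDual Filter Topology Classical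

variable {A : Type} [NonUnitalNormedRing A] [StarRing A] [CStarRing A]
  [NormedSpace ℂ A] [IsScalarTower ℂ A A] [SMulCommClass ℂ A A] [CompleteSpace A] [StarModule ℂ A]

theorem statement_1
    (D : NonUnitalStarSubalgebra ℂ A) (hDclosed : IsClosed (D : Set A))
    (hDabelian : ∀ x ∈ D, ∀ y ∈ D, x * y = y * x)
    (hDapprox : HasApproxUnit (D : Set A))
    (n : A) (hn : IsNormalizer D n) :
    star n * n ∈ D ∧ n * star n ∈ D := by
  obtain ⟨ι, l, e, hne, hmem, htend⟩ := hDapprox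
  haveI := hne
  constructor
  · have h1 : Filter.Tendsto (fun i => e i * n) l (nhds n) := (htend n).1
    have h2 : Filter.Tendsto (fun i => star n * e i * n) l (nhds (star n * n)) := by
      simpa [mul_assoc] using h1.const_mul (star n)
    exact hDclosed.mem_of_tendsto h2
      (Filter.Eventually.of_forall fun i => (hn (e i) (hmem i)).2)
  · have h1 : Filter.Tendsto (fun i => e i * star n) l (nhds (star n)) := (htend (star n)).1
    have h2 : Filter.Tendsto (fun i => n * e i * star n) l (nhds (n * star n)) := by
      simpa [mul_assoc] using h1.const_mul n
    exact hDclosed.mem_of_tendsto h2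
      (Filter.Eventually.of_forall fun i => (hn (e i) (hmem i)).1)
end

section
/- Let A be a separable C*-algebra and D ⊆ A a weakly Cartan subalgebra. Suppose m ∈ N(D), φ ∈ supp°(m*m), and φ(m*m) = 1. Then for every a ∈ D' one has m* a m ∈ D', and there is an isomorphism of C*-algebras ι_m : D'/J_{α_m(φ)} → D'/J_φ such that ι_m(π_{α_m(φ)}(a)) = π_φ(m* a m) for all a ∈ D'. -/
/-!
Conjugation `a ↦ m* a m` preserves `D'`: for `d ∈ D` the commutator `x = [m* a m, d]` satisfies
`x m* m = 0`, hence `x m* = 0` by the C*-identity, and then `x x* = 0`. Since `m m* ∈ D` commutes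
with `D'`, conjugation is multiplicative up to a right factor `m* m`, and `m* m` acts as the unit
modulo `J_φ` because `φ(m* m) = 1` and `D'/J_φ` has a unit represented in `D`. Conjugation also
carries `J_{α_m(φ)}` into `J_φ`, so it descends to a *-homomorphism
`D'/J_{α_m(φ)} → D'/J_φ`. Conjugation by `m*` descends the other way, and the two are inverse
because `m m* a m m* ≡ a` modulo `J_{α_m(φ)}` and `m* m a m* m ≡ a` modulo `J_φ`.
-/

open WeakDual Filter Topology Classical

variable {A : Type} [NonUnitalNormedRing A] [StarRing A] [CStarRing A]
  [NormedSpace ℂ A] [IsScalarTower ℂ A A] [SMulCommClass ℂ A A] [CompleteSpace A] [StarModule ℂ A]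

set_option linter.unusedSectionVars false

section QuotientMaps

variable {S R Q₁ Q₂ : Type*} [Monoid S]
  [NonUnitalNonAssocRing R] [DistribMulAction S R] [Star R]
  [NonUnitalNonAssocRing Q₁] [DistribMulAction S Q₁] [Star Q₁]
  [NonUnitalNonAssocRing Q₂] [DistribMulAction S Q₂] [Star Q₂]

theorem NonUnitalStarAlgHom.exists_comp_eq_of_surjective (π : R →⋆ₙₐ[S] Q₁)
    (hπ : Function.Surjective π) (F : R →⋆ₙₐ[S] Q₂) (hF : ∀ a, π a = 0 → F a = 0) :
    ∃ f : Q₁ →⋆ₙₐ[S] Q₂, ∀ a, f (π a) = F a := by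
  let s := Function.surjInv hπ
  have hs : ∀ a, F (s (π a)) = F a := fun a => by
    rw [← sub_eq_zero, ← map_sub]
    exact hF _ (by rw [map_sub, Function.surjInv_eq hπ, sub_self])
  let f : Q₁ →⋆ₙₐ[S] Q₂ :=
    { toFun q := F (s q)
      map_smul' c q := by
        obtain ⟨a, rfl⟩ := hπ q
        simp only [← map_smul, hs]
        rfl
      map_zero' := by simpa only [map_zero] using hs 0
      map_add' q q' := by
        obtain ⟨a, rfl⟩ := hπ q
        obtain ⟨b, rfl⟩ := hπ q'
        simp only [← map_add, hs]
      map_mul' q q' := by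
        obtain ⟨a, rfl⟩ := hπ q
        obtain ⟨b, rfl⟩ := hπ q'
        simp only [← map_mul, hs]
      map_star' q := by
        obtain ⟨a, rfl⟩ := hπ q
        simp only [← map_star, hs] }
  exact ⟨f, hs⟩

theorem NonUnitalStarAlgHom.exists_starAlgEquiv_of_surjective
    (π₁ : R →⋆ₙₐ[S] Q₁) (π₂ : R →⋆ₙₐ[S] Q₂)
    (hπ₁ : Function.Surjective π₁) (hπ₂ : Function.Surjective π₂)
    (F : R →⋆ₙₐ[S] Q₂) (G : R →⋆ₙₐ[S] Q₁)
    (hF : ∀ a, π₁ a = 0 → F a = 0) (hG : ∀ a, π₂ a = 0 → G a = 0)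
    (hGF : ∀ a, ∃ b, F a = π₂ b ∧ G b = π₁ a) (hFG : ∀ a, ∃ b, G a = π₁ b ∧ F b = π₂ a) :
    ∃ ι : Q₁ ≃⋆ₐ[S] Q₂, ∀ a, ι (π₁ a) = F a := by
  obtain ⟨f, hf⟩ := π₁.exists_comp_eq_of_surjective hπ₁ F hF
  obtain ⟨g, hg⟩ := π₂.exists_comp_eq_of_surjective hπ₂ G hG
  have hgf : Function.LeftInverse g f := fun q => by
    obtain ⟨a, rfl⟩ := hπ₁ q
    obtain ⟨b, hFb, hGb⟩ := hGF a
    rw [hf, hFb, hg, hGb]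
  have hfg : Function.RightInverse g f := fun q => by
    obtain ⟨a, rfl⟩ := hπ₂ q
    obtain ⟨b, hGb, hFb⟩ := hFG a
    rw [hg, hGb, hf, hFb]
  exact ⟨StarAlgEquiv.ofBijective f ⟨hgf.injective, hfg.surjective⟩, hf⟩

end QuotientMaps

theorem mul_star_eq_zero_of_mul_star_mul_self_eq_zero {E : Type*} [NonUnitalNormedRing E]
    [StarRing E] [CStarRing E] {x n : E} (h : x * (star n * n) = 0) : x * star n = 0 := by
  rw [← CStarRing.mul_star_self_eq_zero_iff]
  calc x * star n * star (x * star n) = x * (star n * n) * star x := by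
        simp only [star_mul, star_star, mul_assoc]
    _ = 0 := by rw [h, zero_mul]

section WeaklyCartan

variable {D : NonUnitalStarSubalgebra ℂ A}

theorem evalD_mul (φ : characterSpace ℂ D) {x y : A} (hx : x ∈ D) (hy : y ∈ D) :
    evalD D φ (x * y) = evalD D φ x * evalD D φ y := by
  simp only [evalD, dif_pos hx, dif_pos hy, dif_pos (mul_mem hx hy)]
  exact map_mul φ (⟨x, hx⟩ : D) ⟨y, hy⟩

theorem evalD_sub (φ : characterSpace ℂ D) {x y : A} (hx : x ∈ D) (hy : y ∈ D) :
    evalD D φ (x - y) = evalD D φ x - evalD D φ y := by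
  simp only [evalD, dif_pos hx, dif_pos hy, dif_pos (sub_mem hx hy)]
  exact map_sub φ (⟨x, hx⟩ : D) ⟨y, hy⟩

theorem IsNormalizer.star {n : A} (hn : IsNormalizer D n) : IsNormalizer D (star n) :=
  fun d hd => by simpa only [star_star, and_comm] using hn d hd

theorem star_mul_self_mem_of_hasApproxUnit (hclosed : IsClosed (D : Set A))
    (happrox : HasApproxUnit (D : Set A)) {n : A} (hn : IsNormalizer D n) : star n * n ∈ D := by
  obtain ⟨ι, l, e, hl, heD, he⟩ := happrox
  exact hclosed.mem_of_tendsto ((he n).1.const_mul (star n))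
    (Eventually.of_forall fun i => by
      simpa only [mul_assoc, SetLike.mem_coe] using (hn _ (heD i)).2)

theorem mem_commutantSet_of_mem (habel : ∀ x ∈ D, ∀ y ∈ D, x * y = y * x) {k : A} (hk : k ∈ D) :
    k ∈ commutantSet D :=
  fun d hd => habel k hk d hd

theorem mul_mem_commutantSet {a b : A} (ha : a ∈ commutantSet D) (hb : b ∈ commutantSet D) :
    a * b ∈ commutantSet D :=
  (commutantAlg D).mul_mem ha hb

theorem conj_commutator_mul_star_mul_self_eq_zero (habel : ∀ x ∈ D, ∀ y ∈ D, x * y = y * x)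
    {n : A} (hn : IsNormalizer D n) (hnn : star n * n ∈ D) (hnn' : n * star n ∈ D)
    {a : A} (ha : a ∈ commutantSet D) {d : A} (hd : d ∈ D) :
    (star n * a * n * d - d * (star n * a * n)) * (star n * n) = 0 := by
  have h₁ : star n * a * n * d * (star n * n) = star n * n * d * (star n * a * n) :=
    calc star n * a * n * d * (star n * n) = star n * (a * (n * d * star n)) * n := by
          simp only [mul_assoc]
      _ = star n * ((n * d * star n) * a) * n := by rw [ha _ (hn d hd).1]
      _ = star n * n * d * (star n * a * n) := by simp only [mul_assoc]
  have h₂ : d * (star n * a * n) * (star n * n) = star n * n * d * (star n * a * n) :=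
    calc d * (star n * a * n) * (star n * n) = d * star n * (a * (n * star n)) * n := by
          simp only [mul_assoc]
      _ = d * star n * ((n * star n) * a) * n := by rw [ha _ hnn']
      _ = d * (star n * n) * (star n * a * n) := by simp only [mul_assoc]
      _ = star n * n * d * (star n * a * n) := by rw [habel d hd _ hnn]
  rw [sub_mul, h₁, h₂, sub_self]

theorem conj_mem_commutantSet (habel : ∀ x ∈ D, ∀ y ∈ D, x * y = y * x)
    {n : A} (hn : IsNormalizer D n) (hnn : star n * n ∈ D) (hnn' : n * star n ∈ D)
    {a : A} (ha : a ∈ commutantSet D) : star n * a * n ∈ commutantSet D := by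
  set y := star n * a * n
  have hx : ∀ e ∈ D, (y * e - e * y) * star n = 0 := fun e he =>
    mul_star_eq_zero_of_mul_star_mul_self_eq_zero
      (conj_commutator_mul_star_mul_self_eq_zero habel hn hnn hnn' ha he)
  intro d hd
  have hxd : (y * d - d * y) * star d * star n = 0 := by
    have h : (y * d - d * y) * star d
        = (y * (d * star d) - d * star d * y) - d * (y * star d - star d * y) := by
      noncomm_ring
    rw [h, sub_mul, hx _ (mul_mem hd (star_mem hd)), mul_assoc d, hx _ (star_mem hd),
      mul_zero, sub_zero]
  rw [← sub_eq_zero, ← CStarRing.mul_star_self_eq_zero_iff]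
  calc (y * d - d * y) * star (y * d - d * y)
      = (y * d - d * y) * star d * star n * (star a * n)
        - (y * d - d * y) * star n * (star a * n * star d) := by
        simp only [y, star_sub, star_mul, star_star, mul_assoc, mul_sub]
    _ = 0 := by rw [hxd, hx d hd, zero_mul, zero_mul, sub_self]

noncomputable def Jsubmodule (D : NonUnitalStarSubalgebra ℂ A) (φ : characterSpace ℂ D) :
    Submodule ℂ A :=
  (Submodule.span ℂ {x : A | ∃ k ∈ (D : Set A), ∃ a ∈ commutantSet D,
    evalD D φ k = 0 ∧ x = k * a}).topologicalClosure

theorem mem_Jsubmodule {φ : characterSpace ℂ D} {x : A} : x ∈ Jsubmodule D φ ↔ x ∈ Jset D φ :=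
  Iff.rfl

theorem add_mem_Jset {φ : characterSpace ℂ D} {x y : A} (hx : x ∈ Jset D φ)
    (hy : y ∈ Jset D φ) : x + y ∈ Jset D φ :=
  mem_Jsubmodule.1 (add_mem (mem_Jsubmodule.2 hx) (mem_Jsubmodule.2 hy))

theorem sub_mem_Jset {φ : characterSpace ℂ D} {x y : A} (hx : x ∈ Jset D φ)
    (hy : y ∈ Jset D φ) : x - y ∈ Jset D φ :=
  mem_Jsubmodule.1 (sub_mem (mem_Jsubmodule.2 hx) (mem_Jsubmodule.2 hy))

theorem mul_mem_Jset_of_evalD_eq_zero {φ : characterSpace ℂ D} {k c : A} (hk : k ∈ D)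
    (hk0 : evalD D φ k = 0) (hc : c ∈ commutantSet D) : k * c ∈ Jset D φ :=
  subset_closure (Submodule.subset_span ⟨k, hk, c, hc, hk0, rfl⟩)

theorem mapsTo_Jset {φ ψ : characterSpace ℂ D} (T : A →ₗ[ℂ] A) (hT : Continuous T)
    (hgen : ∀ k ∈ D, evalD D ψ k = 0 → ∀ c ∈ commutantSet D, T (k * c) ∈ Jset D φ) :
    Set.MapsTo T (Jset D ψ) (Jset D φ) := by
  have hspan : Submodule.span ℂ {x : A | ∃ k ∈ (D : Set A), ∃ a ∈ commutantSet D,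
      evalD D ψ k = 0 ∧ x = k * a} ≤ (Jsubmodule D φ).comap T :=
    Submodule.span_le.2 fun _ ⟨k, hk, c, hc, hk0, hx⟩ => hx ▸ hgen k hk hk0 c hc
  have hmaps : Set.MapsTo T (Jset D ψ) (closure (Jset D φ)) :=
    Set.MapsTo.closure (fun x hx => mem_Jsubmodule.1 (hspan hx)) hT
  exact fun x hx => isClosed_closure.closure_subset (hmaps hx)

theorem mul_mem_Jset_of_mem_commutantSet {φ : characterSpace ℂ D} {c j : A}
    (hc : c ∈ commutantSet D) (hj : j ∈ Jset D φ) : c * j ∈ Jset D φ :=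
  mapsTo_Jset (LinearMap.mulLeft ℂ c) (continuous_const_mul c)
    (fun k hk hk0 a ha => by
      rw [LinearMap.mulLeft_apply, ← mul_assoc, hc k hk, mul_assoc]
      exact mul_mem_Jset_of_evalD_eq_zero hk hk0 (mul_mem_commutantSet hc ha)) hj

theorem mul_sub_mem_Jset_of_evalD_eq_one (habel : ∀ x ∈ D, ∀ y ∈ D, x * y = y * x)
    {φ : characterSpace ℂ D} (hunit : ∃ e ∈ D, IsUnitModJ D φ e) {k : A} (hk : k ∈ D)
    (hk1 : evalD D φ k = 1) {c : A} (hc : c ∈ commutantSet D) : c * k - c ∈ Jset D φ := by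
  obtain ⟨e, heD, -, he⟩ := hunit
  have h₁ : (k * e - e) * c ∈ Jset D φ := by
    refine mul_mem_Jset_of_evalD_eq_zero (sub_mem (mul_mem hk heD) heD) ?_ hc
    rw [evalD_sub φ (mul_mem hk heD) heD, evalD_mul φ hk heD, hk1, one_mul, sub_self]
  have h₂ : k * (e * c - c) ∈ Jset D φ :=
    mul_mem_Jset_of_mem_commutantSet (mem_commutantSet_of_mem habel hk) (he c hc).1
  have h : c * k - c = (k * e - e) * c - k * (e * c - c) + (e * c - c) := by
    rw [hc k hk]
    noncomm_ring
  rw [h]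
  exact add_mem_Jset (sub_mem_Jset h₁ h₂) (he c hc).1

theorem mul_mul_sub_mem_Jset_of_evalD_eq_one (habel : ∀ x ∈ D, ∀ y ∈ D, x * y = y * x)
    {φ : characterSpace ℂ D} (hunit : ∃ e ∈ D, IsUnitModJ D φ e) {k : A} (hk : k ∈ D)
    (hk1 : evalD D φ k = 1) {a : A} (ha : a ∈ commutantSet D) : k * a * k - a ∈ Jset D φ := by
  have h : k * a * k - a = (a * k * k - a * k) + (a * k - a) := by
    rw [← ha k hk]
    abel
  rw [h]
  exact add_mem_Jset (mul_sub_mem_Jset_of_evalD_eq_one habel hunit hk hk1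
    (mul_mem_commutantSet ha (mem_commutantSet_of_mem habel hk)))
    (mul_sub_mem_Jset_of_evalD_eq_one habel hunit hk hk1 ha)

theorem conj_mul_conj_sub_mem_Jset (habel : ∀ x ∈ D, ∀ y ∈ D, x * y = y * x)
    {n : A} (hn : IsNormalizer D n) (hnn : star n * n ∈ D) (hnn' : n * star n ∈ D)
    {χ : characterSpace ℂ D} (hχ : evalD D χ (star n * n) = 1)
    (hunit : ∃ e ∈ D, IsUnitModJ D χ e) {x y : A} (hx : x ∈ commutantSet D)
    (hy : y ∈ commutantSet D) :
    star n * x * n * (star n * y * n) - star n * (x * y) * n ∈ Jset D χ := by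
  -- `y` commutes with `n n*`, so `(n* x n)(n* y n) = (n* x y n)(n* n)`
  have h : star n * x * n * (star n * y * n) = star n * (x * y) * n * (star n * n) := by
    rw [show star n * x * n * (star n * y * n) = star n * x * ((n * star n) * y) * n by
      simp only [mul_assoc], ← hy _ hnn']
    simp only [mul_assoc]
  rw [h]
  exact mul_sub_mem_Jset_of_evalD_eq_one habel hunit hnn hχ
    (conj_mem_commutantSet habel hn hnn hnn' (mul_mem_commutantSet hx hy))

-- `χ' = α_n(χ)`, normalised so that `χ(n*n) = 1`.
def IsConjugateChar (D : NonUnitalStarSubalgebra ℂ A) (n : A) (χ χ' : characterSpace ℂ D) :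
    Prop :=
  evalD D χ (star n * n) = 1 ∧ ∀ d ∈ D, evalD D χ' d = evalD D χ (star n * d * n)

theorem IsWeylHomeo.isConjugateChar {n : A}
    {α : PartialHomeomorph (characterSpace ℂ D) (characterSpace ℂ D)} (hα : IsWeylHomeo D n α)
    {φ : characterSpace ℂ D} (hφ1 : evalD D φ (star n * n) = 1) :
    IsConjugateChar D n φ (α φ) := by
  have hφ : φ ∈ α.source := hα.1 ▸ (show evalD D φ (star n * n) ≠ 0 from hφ1 ▸ one_ne_zero)
  refine ⟨hφ1, fun d hd => ?_⟩
  simpa only [hφ1, one_mul] using hα.2.2 φ hφ d hd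

theorem IsConjugateChar.symm {n : A} (hn : IsNormalizer D n) (hnn : star n * n ∈ D)
    (hnn' : n * star n ∈ D) {χ χ' : characterSpace ℂ D} (h : IsConjugateChar D n χ χ') :
    IsConjugateChar D (star n) χ' χ := by
  refine ⟨?_, fun d hd => ?_⟩
  · rw [star_star, h.2 _ hnn', show star n * (n * star n) * n = star n * n * (star n * n) by
      simp only [mul_assoc], evalD_mul χ hnn hnn, h.1, one_mul]
  · rw [star_star, h.2 _ (hn d hd).1,
      show star n * (n * d * star n) * n = star n * n * d * (star n * n) by simp only [mul_assoc],
      evalD_mul χ (mul_mem hnn hd) hnn, evalD_mul χ hnn hd, h.1, one_mul, mul_one]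

theorem conj_mem_Jset (habel : ∀ x ∈ D, ∀ y ∈ D, x * y = y * x)
    {n : A} (hn : IsNormalizer D n) (hnn : star n * n ∈ D) (hnn' : n * star n ∈ D)
    {χ χ' : characterSpace ℂ D} (hχ : IsConjugateChar D n χ χ')
    (hunit : ∃ e ∈ D, IsUnitModJ D χ e) {j : A} (hj : j ∈ Jset D χ') :
    star n * j * n ∈ Jset D χ := by
  have hgen : ∀ k ∈ D, evalD D χ' k = 0 → ∀ c ∈ commutantSet D,
      star n * (k * c) * n ∈ Jset D χ := by
    intro k hk hk0 c hc
    have hk0' : evalD D χ (star n * k * n) = 0 := by rw [← hχ.2 k hk, hk0]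
    rw [← sub_sub_cancel (star n * k * n * (star n * c * n)) (star n * (k * c) * n)]
    exact sub_mem_Jset
      (mul_mem_Jset_of_evalD_eq_zero (hn k hk).2 hk0' (conj_mem_commutantSet habel hn hnn hnn' hc))
      (conj_mul_conj_sub_mem_Jset habel hn hnn hnn' hχ.1 hunit
        (mem_commutantSet_of_mem habel hk) hc)
  exact mapsTo_Jset (LinearMap.mulLeftRight ℂ (star n, n))
    ((continuous_const_mul (star n)).mul_const n) hgen hj

theorem map_eq_of_sub_mem_Jset {Q : Type*} [NonUnitalNonAssocRing Q] [Module ℂ Q] [Star Q]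
    (π : commutantAlg D →⋆ₙₐ[ℂ] Q) {χ : characterSpace ℂ D}
    (hπ : ∀ a : commutantAlg D, (a : A) ∈ Jset D χ → π a = 0) {a b : commutantAlg D}
    (h : (a : A) - b ∈ Jset D χ) : π a = π b :=
  sub_eq_zero.1 (by rw [← map_sub]; exact hπ _ h)

theorem exists_conj_starAlgHom (habel : ∀ x ∈ D, ∀ y ∈ D, x * y = y * x)
    {n : A} (hn : IsNormalizer D n) (hnn : star n * n ∈ D) (hnn' : n * star n ∈ D)
    {χ : characterSpace ℂ D} (hχ : evalD D χ (star n * n) = 1)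
    (hunit : ∃ e ∈ D, IsUnitModJ D χ e)
    {Q : Type*} [NonUnitalNonAssocRing Q] [Module ℂ Q] [Star Q] (π : commutantAlg D →⋆ₙₐ[ℂ] Q)
    (hπ : ∀ a : commutantAlg D, (a : A) ∈ Jset D χ → π a = 0) :
    ∃ F : commutantAlg D →⋆ₙₐ[ℂ] Q,
      ∀ a b : commutantAlg D, (b : A) = star n * a * n → F a = π b := by
  have hconj := fun (a : commutantAlg D) => conj_mem_commutantSet habel hn hnn hnn' a.2
  let F : commutantAlg D →⋆ₙₐ[ℂ] Q :=
    { toFun a := π ⟨star n * a * n, hconj a⟩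
      map_smul' c a := by
        rw [← map_smul]
        exact congrArg π (Subtype.ext (show star n * (c • (a : A)) * n = c • (star n * a * n) by
          rw [mul_smul_comm, smul_mul_assoc]))
      map_zero' := by
        rw [← map_zero π]
        exact congrArg π (Subtype.ext (show star n * 0 * n = 0 by simp))
      map_add' a b := by
        rw [← map_add]
        exact congrArg π (Subtype.ext (show star n * (a + b : A) * n
          = star n * a * n + star n * b * n by rw [mul_add, add_mul]))
      map_mul' a b := by
        rw [← map_mul]
        exact (map_eq_of_sub_mem_Jset π hπ
          (conj_mul_conj_sub_mem_Jset habel hn hnn hnn' hχ hunit a.2 b.2)).symm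
      map_star' a := by
        rw [← map_star]
        exact congrArg π (Subtype.ext (show star n * star (a : A) * n = star (star n * a * n) by
          simp only [star_mul, star_star, mul_assoc])) }
  exact ⟨F, fun a b hb => congrArg π (Subtype.ext hb.symm)⟩

theorem exists_conj_starAlgEquiv (habel : ∀ x ∈ D, ∀ y ∈ D, x * y = y * x)
    {n : A} (hn : IsNormalizer D n) (hnn : star n * n ∈ D) (hnn' : n * star n ∈ D)
    {χ χ' : characterSpace ℂ D} (hχ : IsConjugateChar D n χ χ')
    (hunit : ∃ e ∈ D, IsUnitModJ D χ e) (hunit' : ∃ e ∈ D, IsUnitModJ D χ' e)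
    {Q₁ Q₂ : Type*} [NonUnitalNonAssocRing Q₁] [Module ℂ Q₁] [Star Q₁]
    [NonUnitalNonAssocRing Q₂] [Module ℂ Q₂] [Star Q₂]
    (π₁ : commutantAlg D →⋆ₙₐ[ℂ] Q₁) (π₂ : commutantAlg D →⋆ₙₐ[ℂ] Q₂)
    (hπ₁ : Function.Surjective π₁) (hk₁ : ∀ a : commutantAlg D, π₁ a = 0 ↔ (a : A) ∈ Jset D χ')
    (hπ₂ : Function.Surjective π₂) (hk₂ : ∀ a : commutantAlg D, π₂ a = 0 ↔ (a : A) ∈ Jset D χ) :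
    ∃ ι : Q₁ ≃⋆ₐ[ℂ] Q₂, ∀ a b : commutantAlg D, (b : A) = star n * a * n → ι (π₁ a) = π₂ b := by
  have hχ' := hχ.symm hn hnn hnn'
  have hn' := hn.star
  have hnn₂ : star (star n) * star n ∈ D := by rwa [star_star]
  have hnn₂' : star n * star (star n) ∈ D := by rwa [star_star]
  have hχ'1 : evalD D χ' (n * star n) = 1 := by simpa only [star_star] using hχ'.1
  have hconj := fun (a : commutantAlg D) => conj_mem_commutantSet habel hn hnn hnn' a.2
  have hconj' : ∀ a : commutantAlg D, n * a * star n ∈ commutantSet D := fun a => by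
    simpa only [star_star] using conj_mem_commutantSet habel hn' hnn₂ hnn₂' a.2
  obtain ⟨F, hF⟩ := exists_conj_starAlgHom habel hn hnn hnn' hχ.1 hunit π₂ fun a => (hk₂ a).2
  obtain ⟨G, hG⟩ := exists_conj_starAlgHom habel hn' hnn₂ hnn₂' hχ'.1 hunit' π₁
    fun a => (hk₁ a).2
  simp only [star_star] at hG
  refine (π₁.exists_starAlgEquiv_of_surjective π₂ hπ₁ hπ₂ F G ?_ ?_ ?_ ?_).imp
    fun ι hι a b hb => (hι a).trans (hF a b hb)
  · intro a ha
    rw [hF a ⟨_, hconj a⟩ rfl, hk₂]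
    exact conj_mem_Jset habel hn hnn hnn' hχ hunit ((hk₁ a).1 ha)
  · intro a ha
    rw [hG a ⟨_, hconj' a⟩ rfl, hk₁]
    simpa only [star_star] using conj_mem_Jset habel hn' hnn₂ hnn₂' hχ' hunit' ((hk₂ a).1 ha)
  · intro a
    refine ⟨⟨_, hconj a⟩, hF a _ rfl, ?_⟩
    rw [hG _ ⟨_, hconj' ⟨_, hconj a⟩⟩ rfl]
    refine map_eq_of_sub_mem_Jset π₁ (fun a => (hk₁ a).2) ?_
    simpa only [mul_assoc] using mul_mul_sub_mem_Jset_of_evalD_eq_one habel hunit' hnn' hχ'1 a.2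
  · intro a
    refine ⟨⟨_, hconj' a⟩, hG a _ rfl, ?_⟩
    rw [hF _ ⟨_, hconj ⟨_, hconj' a⟩⟩ rfl]
    refine map_eq_of_sub_mem_Jset π₂ (fun a => (hk₂ a).2) ?_
    simpa only [mul_assoc] using mul_mul_sub_mem_Jset_of_evalD_eq_one habel hunit hnn hχ.1 a.2

end WeaklyCartan

theorem statement_10_general
    (D : NonUnitalStarSubalgebra ℂ A) (hD : IsWeaklyCartan D)
    (m : A) (hm : IsNormalizer D m)
    (αm : PartialHomeomorph (characterSpace ℂ D) (characterSpace ℂ D))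
    (hαm : IsWeylHomeo D m αm)
    (φ : characterSpace ℂ D)
    (hφ1 : evalD D φ (star m * m) = 1) :
    (∀ a ∈ commutantSet D, star m * a * m ∈ commutantSet D) ∧
    ∀ (Q₁ Q₂ : Type)
      [NonUnitalNormedRing Q₁] [StarRing Q₁] [CStarRing Q₁] [NormedSpace ℂ Q₁]
      [IsScalarTower ℂ Q₁ Q₁] [SMulCommClass ℂ Q₁ Q₁] [CompleteSpace Q₁] [StarModule ℂ Q₁]
      [NonUnitalNormedRing Q₂] [StarRing Q₂] [CStarRing Q₂] [NormedSpace ℂ Q₂]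
      [IsScalarTower ℂ Q₂ Q₂] [SMulCommClass ℂ Q₂ Q₂] [CompleteSpace Q₂] [StarModule ℂ Q₂]
      (π₁ : commutantAlg D →⋆ₙₐ[ℂ] Q₁) (π₂ : commutantAlg D →⋆ₙₐ[ℂ] Q₂),
      Function.Surjective ⇑π₁ →
      (∀ a : commutantAlg D, π₁ a = 0 ↔ (a : A) ∈ Jset D (αm φ)) →
      Function.Surjective ⇑π₂ →
      (∀ a : commutantAlg D, π₂ a = 0 ↔ (a : A) ∈ Jset D φ) →
      ∃ ι : Q₁ ≃⋆ₐ[ℂ] Q₂,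
        ∀ a b : commutantAlg D, (b : A) = star m * (a : A) * m → ι (π₁ a) = π₂ b := by
  obtain ⟨hclosed, habel, happrox, -, hlocunit⟩ := hD
  have hunit : ∀ χ, ∃ e ∈ D, IsUnitModJ D χ e := fun χ => by
    obtain ⟨e, he, U, -, hχU, hU⟩ := hlocunit χ
    exact ⟨e, he, hU χ hχU⟩
  have hmm := star_mul_self_mem_of_hasApproxUnit hclosed happrox hm
  have hmm' : m * star m ∈ D := by
    simpa only [star_star] using star_mul_self_mem_of_hasApproxUnit hclosed happrox hm.star
  exact ⟨fun a ha => conj_mem_commutantSet habel hm hmm hmm' ha,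
    fun _ _ _ _ _ _ _ _ _ _ _ _ _ _ _ _ _ _ π₁ π₂ hπ₁ hk₁ hπ₂ hk₂ =>
      exists_conj_starAlgEquiv habel hm hmm hmm' (hαm.isConjugateChar hφ1) (hunit _) (hunit _)
        π₁ π₂ hπ₁ hk₁ hπ₂ hk₂⟩

theorem statement_10 [TopologicalSpace.SeparableSpace A]
    (D : NonUnitalStarSubalgebra ℂ A) (hD : IsWeaklyCartan D)
    (m : A) (hm : IsNormalizer D m)
    (αm : PartialHomeomorph (characterSpace ℂ D) (characterSpace ℂ D))
    (hαm : IsWeylHomeo D m αm)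
    (φ : characterSpace ℂ D) (hφ : φ ∈ suppo D (star m * m))
    (hφ1 : evalD D φ (star m * m) = 1) :
    (∀ a ∈ commutantSet D, star m * a * m ∈ commutantSet D) ∧
    ∀ (Q₁ Q₂ : Type)
      [NonUnitalNormedRing Q₁] [StarRing Q₁] [CStarRing Q₁] [NormedSpace ℂ Q₁]
      [IsScalarTower ℂ Q₁ Q₁] [SMulCommClass ℂ Q₁ Q₁] [CompleteSpace Q₁] [StarModule ℂ Q₁]
      [NonUnitalNormedRing Q₂] [StarRing Q₂] [CStarRing Q₂] [NormedSpace ℂ Q₂]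
      [IsScalarTower ℂ Q₂ Q₂] [SMulCommClass ℂ Q₂ Q₂] [CompleteSpace Q₂] [StarModule ℂ Q₂]
      (π₁ : commutantAlg D →⋆ₙₐ[ℂ] Q₁) (π₂ : commutantAlg D →⋆ₙₐ[ℂ] Q₂),
      Function.Surjective ⇑π₁ →
      (∀ a : commutantAlg D, π₁ a = 0 ↔ (a : A) ∈ Jset D (αm φ)) →
      Function.Surjective ⇑π₂ →
      (∀ a : commutantAlg D, π₂ a = 0 ↔ (a : A) ∈ Jset D φ) →
      ∃ ι : Q₁ ≃⋆ₐ[ℂ] Q₂,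
        ∀ a b : commutantAlg D, (b : A) = star m * (a : A) * m → ι (π₁ a) = π₂ b :=
  statement_10_general D hD m hm αm hαm φ hφ1
end

section
/- Let Γ and Λ be countable discrete groups acting continuously on the right of locally compact Hausdorff spaces X and Y respectively, and suppose both actions are topologically free. Let (h, φ, η) be a continuous orbit equivalence from (X, Γ) to (Y, Λ). Then for every x ∈ X: φ(x, γγ') = φ(x, γ)·φ(xγ, γ') for all γ, γ' ∈ Γ; the map θ_x := φ(x, ·) : Γ → Λ is a bijection; θ_x(e_Γ) = e_Λ; and θ_x restricts to bijections Stab(x) → Stab(h(x)) and Stab^ess(x) → Stab^ess(h(x)). -/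
open Topology

/-- A continuous right action of a (discrete) group `Γ` on a topological space `X`. -/
structure RightAction (Γ X : Type) [Group Γ] [TopologicalSpace X] where
  act : X → Γ → X
  act_one : ∀ x, act x 1 = x
  act_mul : ∀ x γ γ', act (act x γ) γ' = act x (γ * γ')
  continuous_act : ∀ γ, Continuous fun x => act x γ

/-- The stabiliser subgroup `Stab(x) = {γ : xγ = x}`, as a set. -/
def RightAction.stab {Γ X : Type} [Group Γ] [TopologicalSpace X]
    (ρ : RightAction Γ X) (x : X) : Set Γ := {γ | ρ.act x γ = x}

/-- The essential stabiliser `Stab^ess(x)`: those `γ` fixing a neighbourhood of `x` pointwise. -/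
def RightAction.stabEss {Γ X : Type} [Group Γ] [TopologicalSpace X]
    (ρ : RightAction Γ X) (x : X) : Set Γ :=
  {γ | ∃ U : Set X, IsOpen U ∧ x ∈ U ∧ ∀ y ∈ U, ρ.act y γ = y}

/-- The action is topologically free if every essential stabiliser is trivial. -/
def RightAction.TopFree {Γ X : Type} [Group Γ] [TopologicalSpace X]
    (ρ : RightAction Γ X) : Prop := ∀ x : X, ρ.stabEss x = {1}

theorem statement_13 (Γ Λ X Y : Type) [Group Γ] [Group Λ] [Countable Γ] [Countable Λ]
    [TopologicalSpace Γ] [DiscreteTopology Γ] [TopologicalSpace Λ] [DiscreteTopology Λ]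
    [TopologicalSpace X] [TopologicalSpace Y]
    [LocallyCompactSpace X] [LocallyCompactSpace Y] [T2Space X] [T2Space Y]
    (ρ : RightAction Γ X) (σ : RightAction Λ Y)
    (hρfree : ρ.TopFree) (hσfree : σ.TopFree)
    (h : X ≃ₜ Y) (φ : X → Γ → Λ) (η : Y → Λ → Γ)
    (hφcont : Continuous fun p : X × Γ => φ p.1 p.2)
    (hηcont : Continuous fun p : Y × Λ => η p.1 p.2)
    (hφeq : ∀ x γ, h (ρ.act x γ) = σ.act (h x) (φ x γ))
    (hηeq : ∀ y lam, h.symm (σ.act y lam) = ρ.act (h.symm y) (η y lam)) :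
    ∀ x : X,
      (∀ γ γ' : Γ, φ x (γ * γ') = φ x γ * φ (ρ.act x γ) γ') ∧
      Function.Bijective (φ x) ∧
      φ x 1 = 1 ∧
      Set.BijOn (φ x) (ρ.stab x) (σ.stab (h x)) ∧
      Set.BijOn (φ x) (ρ.stabEss x) (σ.stabEss (h x)) := by
  -- local constancy of the cocycles
  have locφ : ∀ (x : X) (γ : Γ), ∃ U : Set X, IsOpen U ∧ x ∈ U ∧ ∀ y ∈ U, φ y γ = φ x γ := by
    intro x γ
    refine ⟨(fun y => φ y γ) ⁻¹' {φ x γ}, ?_, rfl, fun y hy => hy⟩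
    exact (isOpen_discrete _).preimage (hφcont.comp (continuous_id.prodMk continuous_const))
  have locη : ∀ (y : Y) (lam : Λ), ∃ V : Set Y, IsOpen V ∧ y ∈ V ∧ ∀ z ∈ V, η z lam = η y lam := by
    intro y lam
    refine ⟨(fun z => η z lam) ⁻¹' {η y lam}, ?_, rfl, fun z hz => hz⟩
    exact (isOpen_discrete _).preimage (hηcont.comp (continuous_id.prodMk continuous_const))
  -- essential stabiliser criteria
  have essρ : ∀ (x : X) (γ : Γ) (U : Set X), IsOpen U → x ∈ U →
      (∀ y ∈ U, ρ.act y γ = y) → γ = 1 := by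
    intro x γ U hUo hxU hfix
    have : γ ∈ ρ.stabEss x := ⟨U, hUo, hxU, hfix⟩
    rwa [hρfree x] at this
  have essσ : ∀ (y : Y) (lam : Λ) (V : Set Y), IsOpen V → y ∈ V →
      (∀ z ∈ V, σ.act z lam = z) → lam = 1 := by
    intro y lam V hVo hyV hfix
    have : lam ∈ σ.stabEss y := ⟨V, hVo, hyV, hfix⟩
    rwa [hσfree y] at this
  -- η (h x) inverts φ x
  have ηφ : ∀ (x : X) (γ : Γ), η (h x) (φ x γ) = γ := by
    intro x γ
    obtain ⟨U1, hU1o, hU1x, hU1⟩ := locφ x γ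
    obtain ⟨V, hVo, hVx, hV⟩ := locη (h x) (φ x γ)
    set c := η (h x) (φ x γ) with hc
    have key : γ * c⁻¹ = 1 := by
      refine essρ x _ (U1 ∩ h ⁻¹' V) (hU1o.inter (hVo.preimage h.continuous))
        ⟨hU1x, hVx⟩ (fun y hy => ?_)
      have hyc : ρ.act y c = ρ.act y γ := by
        have h1 : η (h y) (φ x γ) = c := hV _ hy.2
        have h2 : φ y γ = φ x γ := hU1 _ hy.1
        calc ρ.act y c = ρ.act (h.symm (h y)) (η (h y) (φ x γ)) := by
              rw [h1, h.symm_apply_apply]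
          _ = h.symm (σ.act (h y) (φ x γ)) := (hηeq _ _).symm
          _ = h.symm (σ.act (h y) (φ y γ)) := by rw [h2]
          _ = h.symm (h (ρ.act y γ)) := by rw [hφeq]
          _ = ρ.act y γ := h.symm_apply_apply _
      calc ρ.act y (γ * c⁻¹) = ρ.act (ρ.act y γ) c⁻¹ := (ρ.act_mul _ _ _).symm
        _ = ρ.act (ρ.act y c) c⁻¹ := by rw [hyc]
        _ = ρ.act y (c * c⁻¹) := ρ.act_mul _ _ _
        _ = y := by rw [mul_inv_cancel, ρ.act_one]
    have := mul_eq_one_iff_eq_inv.mp key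
    rw [this, inv_inv]
  -- φ (h.symm y) inverts η y
  have φη : ∀ (y : Y) (lam : Λ), φ (h.symm y) (η y lam) = lam := by
    intro y lam
    obtain ⟨V1, hV1o, hV1y, hV1⟩ := locη y lam
    set c := η y lam with hc
    obtain ⟨U, hUo, hUx, hU⟩ := locφ (h.symm y) c
    set d := φ (h.symm y) c with hd
    have key : lam * d⁻¹ = 1 := by
      refine essσ y _ (V1 ∩ h.symm ⁻¹' U) (hV1o.inter (hUo.preimage h.symm.continuous))
        ⟨hV1y, hUx⟩ (fun z hz => ?_)
      have hzd : σ.act z lam = σ.act z d := by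
        have h1 : η z lam = c := hV1 _ hz.1
        have h2 : φ (h.symm z) c = d := hU _ hz.2
        calc σ.act z lam = h (h.symm (σ.act z lam)) := (h.apply_symm_apply _).symm
          _ = h (ρ.act (h.symm z) (η z lam)) := by rw [hηeq]
          _ = h (ρ.act (h.symm z) c) := by rw [h1]
          _ = σ.act (h (h.symm z)) (φ (h.symm z) c) := hφeq _ _
          _ = σ.act z d := by rw [h2, h.apply_symm_apply]
      calc σ.act z (lam * d⁻¹) = σ.act (σ.act z lam) d⁻¹ := (σ.act_mul _ _ _).symm
        _ = σ.act (σ.act z d) d⁻¹ := by rw [hzd]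
        _ = σ.act z (d * d⁻¹) := σ.act_mul _ _ _
        _ = z := by rw [mul_inv_cancel, σ.act_one]
    have := mul_eq_one_iff_eq_inv.mp key
    rw [this, inv_inv]
  have φη' : ∀ (x : X) (lam : Λ), φ x (η (h x) lam) = lam := by
    intro x lam
    have := φη (h x) lam
    rwa [h.symm_apply_apply] at this
  intro x
  -- cocycle identity
  have cocycle : ∀ γ γ' : Γ, φ x (γ * γ') = φ x γ * φ (ρ.act x γ) γ' := by
    intro γ γ'
    obtain ⟨U1, hU1o, hU1x, hU1⟩ := locφ x (γ * γ')
    obtain ⟨U2, hU2o, hU2x, hU2⟩ := locφ x γ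
    obtain ⟨U3, hU3o, hU3x, hU3⟩ := locφ (ρ.act x γ) γ'
    set a := φ x (γ * γ') with ha
    set b := φ x γ * φ (ρ.act x γ) γ' with hb
    set U : Set X := U1 ∩ U2 ∩ (fun y => ρ.act y γ) ⁻¹' U3 with hUdef
    have hUo : IsOpen U := ((hU1o.inter hU2o).inter (hU3o.preimage (ρ.continuous_act γ)))
    have hxU : x ∈ U := ⟨⟨hU1x, hU2x⟩, hU3x⟩
    have key : a * b⁻¹ = 1 := by
      refine essσ (h x) _ (h '' U) (h.isOpenMap U hUo) ⟨x, hxU, rfl⟩ (fun z hz => ?_)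
      obtain ⟨y, hyU, rfl⟩ := hz
      have hab : σ.act (h y) a = σ.act (h y) b := by
        calc σ.act (h y) a = σ.act (h y) (φ y (γ * γ')) := by rw [hU1 _ hyU.1.1]
          _ = h (ρ.act y (γ * γ')) := (hφeq _ _).symm
          _ = h (ρ.act (ρ.act y γ) γ') := by rw [ρ.act_mul]
          _ = σ.act (h (ρ.act y γ)) (φ (ρ.act y γ) γ') := hφeq _ _
          _ = σ.act (σ.act (h y) (φ y γ)) (φ (ρ.act y γ) γ') := by rw [hφeq]
          _ = σ.act (h y) (φ y γ * φ (ρ.act y γ) γ') := σ.act_mul _ _ _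
          _ = σ.act (h y) b := by rw [hU2 _ hyU.1.2, hU3 _ hyU.2]
      calc σ.act (h y) (a * b⁻¹) = σ.act (σ.act (h y) a) b⁻¹ := (σ.act_mul _ _ _).symm
        _ = σ.act (σ.act (h y) b) b⁻¹ := by rw [hab]
        _ = σ.act (h y) (b * b⁻¹) := σ.act_mul _ _ _
        _ = h y := by rw [mul_inv_cancel, σ.act_one]
    have := mul_eq_one_iff_eq_inv.mp key
    rw [this, inv_inv]
  have hbij : Function.Bijective (φ x) :=
    Function.bijective_iff_has_inverse.mpr ⟨η (h x), ηφ x, φη' x⟩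
  have hone : φ x 1 = 1 := by
    have := cocycle 1 1
    rw [one_mul, ρ.act_one] at this
    exact (left_eq_mul.mp this)
  refine ⟨cocycle, hbij, hone, ?_, ?_⟩
  · -- stab
    refine ⟨fun γ hγ => ?_, fun a _ b _ hab => hbij.1 hab, fun lam hlam => ?_⟩
    · show σ.act (h x) (φ x γ) = h x
      rw [← hφeq, hγ]
    · refine ⟨η (h x) lam, ?_, φη' x lam⟩
      show ρ.act x (η (h x) lam) = x
      have := hηeq (h x) lam
      rw [h.symm_apply_apply] at this
      rw [← this, hlam, h.symm_apply_apply]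
  · -- stabEss
    refine ⟨fun γ hγ => ?_, fun a _ b _ hab => hbij.1 hab, fun lam hlam => ?_⟩
    · obtain ⟨U, hUo, hxU, hfix⟩ := hγ
      obtain ⟨U1, hU1o, hU1x, hU1⟩ := locφ x γ
      refine ⟨h '' (U ∩ U1), h.isOpenMap _ (hUo.inter hU1o), ⟨x, ⟨hxU, hU1x⟩, rfl⟩, ?_⟩
      rintro z ⟨y, hy, rfl⟩
      calc σ.act (h y) (φ x γ) = σ.act (h y) (φ y γ) := by rw [hU1 _ hy.2]
        _ = h (ρ.act y γ) := (hφeq _ _).symm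
        _ = h y := by rw [hfix _ hy.1]
    · obtain ⟨V, hVo, hxV, hfix⟩ := hlam
      obtain ⟨V1, hV1o, hV1y, hV1⟩ := locη (h x) lam
      refine ⟨η (h x) lam, ⟨h ⁻¹' (V ∩ V1), (hVo.inter hV1o).preimage h.continuous,
        ⟨hxV, hV1y⟩, fun y hy => ?_⟩, φη' x lam⟩
      calc ρ.act y (η (h x) lam) = ρ.act (h.symm (h y)) (η (h y) lam) := by
            rw [hV1 _ hy.2, h.symm_apply_apply]
        _ = h.symm (σ.act (h y) lam) := (hηeq _ _).symm
        _ = y := by rw [hfix _ hy.1, h.symm_apply_apply]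
end

section
/- Let Γ and Λ be countable discrete groups acting continuously on the right of locally compact Hausdorff spaces X and Y respectively. Let h : X → Y be a homeomorphism and φ : X × Γ → Λ a continuous map such that h(xγ) = h(x)·φ(x, γ) for all x ∈ X and γ ∈ Γ. Then for all x ∈ X and γ ∈ Γ, γ ∈ Stab^ess(x) if and only if φ(x, γ) ∈ Stab^ess(h(x)). -/
open Topology

theorem statement_14 (Γ Λ X Y : Type) [Group Γ] [Group Λ] [Countable Γ] [Countable Λ]
    [TopologicalSpace Γ] [DiscreteTopology Γ] [TopologicalSpace Λ] [DiscreteTopology Λ]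
    [TopologicalSpace X] [TopologicalSpace Y]
    [LocallyCompactSpace X] [LocallyCompactSpace Y] [T2Space X] [T2Space Y]
    (ρ : RightAction Γ X) (σ : RightAction Λ Y)
    (h : X ≃ₜ Y) (φ : X → Γ → Λ)
    (hφcont : Continuous fun p : X × Γ => φ p.1 p.2)
    (hφeq : ∀ x γ, h (ρ.act x γ) = σ.act (h x) (φ x γ)) :
    ∀ (x : X) (γ : Γ), γ ∈ ρ.stabEss x ↔ φ x γ ∈ σ.stabEss (h x) := by
  intro x γ
  have hφc : Continuous fun x' => φ x' γ :=
    hφcont.comp (continuous_id.prodMk continuous_const)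
  have hopen : IsOpen {x' : X | φ x' γ = φ x γ} :=
    hφc.isOpen_preimage {φ x γ} (isOpen_discrete _)
  constructor
  · rintro ⟨U, hU, hxU, hfix⟩
    refine ⟨h '' (U ∩ {x' | φ x' γ = φ x γ}), ?_, ⟨x, ⟨hxU, rfl⟩, rfl⟩, ?_⟩
    · exact h.isOpenMap _ (hU.inter hopen)
    · rintro y ⟨x', ⟨hx'U, hx'φ⟩, rfl⟩
      rw [← hx'φ, ← hφeq, hfix x' hx'U]
  · rintro ⟨W, hW, hxW, hfix⟩
    refine ⟨h ⁻¹' W ∩ {x' | φ x' γ = φ x γ}, (hW.preimage h.continuous).inter hopen,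
      ⟨hxW, rfl⟩, ?_⟩
    rintro x' ⟨hx'W, hx'φ⟩
    have : h (ρ.act x' γ) = h x' := by
      rw [hφeq, hx'φ, hfix _ hx'W]
    exact h.injective this
end

section
/- Let X be a compact Hausdorff space and let f : ℤ × X → ℤ be a function such that f(n, ·) : X → ℤ is continuous for each n ∈ ℤ and such that for each x ∈ X the map n ↦ f(n, x) is a bijection of ℤ. Then for each M ∈ ℕ there exists M̄ ∈ ℕ such that for every x ∈ X, every integer in the interval [−M, M] is of the form f(n, x) for some integer n with −M̄ ≤ n ≤ M̄. -/
theorem statement_15 (X : Type) [TopologicalSpace X] [CompactSpace X] [T2Space X]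
    (f : ℤ → X → ℤ)
    (hcont : ∀ n : ℤ, Continuous (f n))
    (hbij : ∀ x : X, Function.Bijective fun n : ℤ => f n x) :
    ∀ M : ℕ, ∃ Mbar : ℕ, ∀ (x : X) (k : ℤ), -(M : ℤ) ≤ k → k ≤ (M : ℤ) →
      ∃ n : ℤ, -(Mbar : ℤ) ≤ n ∧ n ≤ (Mbar : ℤ) ∧ f n x = k := by
  intro M
  set S : Finset ℤ := Finset.Icc (-(M : ℤ)) (M : ℤ) with hS
  set U : ℕ → Set X := fun N =>
    ⋂ k ∈ S, ⋃ n ∈ Finset.Icc (-(N : ℤ)) (N : ℤ), (f n) ⁻¹' {k} with hU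
  have hopen : ∀ N, IsOpen (U N) := by
    intro N
    apply isOpen_biInter_finset
    intro k _
    apply isOpen_biUnion
    intro n _
    exact (hcont n).isOpen_preimage _ (isOpen_discrete _)
  have hcover : (Set.univ : Set X) ⊆ ⋃ N, U N := by
    intro x _
    let e : ℤ ≃ ℤ := Equiv.ofBijective _ (hbij x)
    refine Set.mem_iUnion.2 ⟨S.sup (fun k => (e.symm k).natAbs), ?_⟩
    simp only [hU, Set.mem_iInter]
    intro k hk
    have hle : (e.symm k).natAbs ≤ S.sup (fun k => (e.symm k).natAbs) :=
      Finset.le_sup (f := fun k => (e.symm k).natAbs) hk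
    exact Set.mem_iUnion₂.2 ⟨e.symm k, Finset.mem_Icc.2 ⟨by omega, by omega⟩,
      show f (e.symm k) x = k from e.apply_symm_apply k⟩
  obtain ⟨t, ht⟩ := isCompact_univ.elim_finite_subcover U hopen hcover
  refine ⟨t.sup id, ?_⟩
  intro x k hk1 hk2
  have hx : x ∈ ⋃ N ∈ t, U N := ht (Set.mem_univ x)
  obtain ⟨N, hNt, hxN⟩ := Set.mem_iUnion₂.1 hx
  have hkS : k ∈ S := Finset.mem_Icc.2 ⟨hk1, hk2⟩
  have := Set.mem_iInter₂.1 hxN k hkS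
  obtain ⟨n, hn, hfn⟩ := Set.mem_iUnion₂.1 this
  have hNle : N ≤ t.sup id := Finset.le_sup (f := id) hNt
  have hn' := Finset.mem_Icc.1 hn
  exact ⟨n, by omega, by omega, hfn⟩
end

section
/- Let X be a compact Hausdorff space, σ : X → X a homeomorphism, and f : ℤ × X → ℤ a function such that f(n, ·) is continuous for each n ∈ ℤ, f(m + n, x) = f(m, x) + f(n, σ^m(x)) for all m, n ∈ ℤ and x ∈ X, and n ↦ f(n, x) is a bijection of ℤ for each x ∈ X. Then there is a positive integer N such that the sets X₁ := {x ∈ X : f(n, x) > 0 and f(−n, x) < 0 for all n > N} and X₂ := {x ∈ X : f(n, x) < 0 and f(−n, x) > 0 for all n > N} are clopen, satisfy σ(X₁) ⊆ X₁ and σ(X₂) ⊆ X₂, and X is the disjoint union of X₁ and X₂. -/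
/-!
Since `f 1` is locally constant on a compact space, the increments
`f (n + 1) x - f n x = f 1 (σⁿ x)` are bounded by some `C`. Compactness and injectivity show that
each value is taken by `f n` only for finitely many `n`, so `C < |f n x|` once `N < |n|`,
uniformly in `x`. A sequence with steps at most `C` cannot jump across `[-C, C]`, so the sign of
`f n x` is constant for `n > N` and for `n < -N`; the two signs differ, since otherwise the
surjection `n ↦ f n x` would take only finitely many values of the other sign. Hence `X₁` and
`X₂` are `{x | 0 < f (N + 1) x}` and its complement, and `σ` preserves them because
`f (N + 1) (σ x) = f (N + 2) x - f 1 x`.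
-/

open Function Set

lemma pos_iff_pos_of_abs_sub_le {a b C : ℤ} (h : |b - a| ≤ C) (hb : C < |b|) :
    0 < a ↔ 0 < b := by
  rw [abs_le] at h
  rw [lt_abs] at hb
  omega

section BoundedSteps

variable {g : ℤ → ℤ} {C N : ℤ}

lemma pos_iff_pos_of_lt (hstep : ∀ n, |g (n + 1) - g n| ≤ C) (hesc : ∀ n, N < |n| → C < |g n|)
    {n : ℤ} (hn : N < n) : 0 < g n ↔ 0 < g (N + 1) := by
  induction n, (hn : N + 1 ≤ n) using Int.leInduction with
  | base => rfl
  | succ m hm ih =>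
    rw [← ih]
    exact (pos_iff_pos_of_abs_sub_le (hstep m) (hesc (m + 1) (lt_abs.2 (.inl (by omega))))).symm

lemma pos_iff_pos_of_lt_neg (hstep : ∀ n, |g (n + 1) - g n| ≤ C)
    (hesc : ∀ n, N < |n| → C < |g n|) {n : ℤ} (hn : N < n) :
    0 < g (-n) ↔ 0 < g (-(N + 1)) := by
  refine pos_iff_pos_of_lt (g := fun n => g (-n)) (C := C) (fun n => ?_) (fun n hn => ?_) hn
  · have := hstep (-n - 1)
    rwa [sub_add_cancel, abs_sub_comm, ← neg_add'] at this
  · exact hesc (-n) (by rwa [abs_neg])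

lemma not_surjective_of_pos_of_lt_abs (h : ∀ n, N < |n| → 0 < g n) : ¬ Surjective g := by
  intro hg
  have hsub : Iio 0 ⊆ g '' Icc (-N) N := by
    intro v hv
    obtain ⟨n, rfl⟩ := hg v
    refine ⟨n, ?_, rfl⟩
    by_contra hn
    have := h n (lt_abs.2 (by rw [mem_Icc] at hn; omega))
    exact (lt_asymm this) hv
  exact Iio_infinite 0 (((finite_Icc _ _).image g).subset hsub)

lemma ne_zero_of_lt_abs (hstep : ∀ n, |g (n + 1) - g n| ≤ C) (hesc : ∀ n, N < |n| → C < |g n|)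
    {n : ℤ} (hn : N < |n|) : g n ≠ 0 := by
  have := (abs_nonneg _).trans (hstep 0)
  have := hesc n hn
  exact abs_pos.1 (by omega)

lemma forall_tail_pos_iff (hg : Surjective g) (hstep : ∀ n, |g (n + 1) - g n| ≤ C)
    (hesc : ∀ n, N < |n| → C < |g n|) :
    (∀ n, N < n → 0 < g n ∧ g (-n) < 0) ↔ 0 < g (N + 1) := by
  refine ⟨fun h => (h (N + 1) (by omega)).1, fun hpos n hn => ?_⟩
  refine ⟨(pos_iff_pos_of_lt hstep hesc hn).2 hpos, not_le.1 fun hnonneg => ?_⟩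
  -- otherwise `g` is positive on both tails, so it misses all but finitely many negative values
  have hpos_neg : 0 < g (-(N + 1)) := (pos_iff_pos_of_lt_neg hstep hesc hn).1
    (hnonneg.lt_of_ne' (ne_zero_of_lt_abs hstep hesc (by rw [abs_neg]; exact lt_abs.2 (.inl hn))))
  refine not_surjective_of_pos_of_lt_abs (N := N) (fun m hm => ?_) hg
  rcases lt_abs.1 hm with hm | hm
  · exact (pos_iff_pos_of_lt hstep hesc hm).2 hpos
  · simpa using (pos_iff_pos_of_lt_neg hstep hesc hm).2 hpos_neg

lemma forall_tail_neg_iff (hg : Surjective g) (hstep : ∀ n, |g (n + 1) - g n| ≤ C)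
    (hesc : ∀ n, N < |n| → C < |g n|) :
    (∀ n, N < n → g n < 0 ∧ 0 < g (-n)) ↔ ¬ 0 < g (N + 1) := by
  have := forall_tail_pos_iff (g := -g) ((Equiv.neg ℤ).surjective.comp hg)
    (fun n => by rw [Pi.neg_apply, Pi.neg_apply, neg_sub_neg, abs_sub_comm]; exact hstep n)
    (fun n hn => by simpa using hesc n hn)
  simp only [Pi.neg_apply, neg_pos, neg_lt_zero] at this
  have hne : g (N + 1) ≠ 0 := ne_zero_of_lt_abs hstep hesc (lt_abs.2 (.inl (by omega)))
  rw [this, not_lt, le_iff_lt_or_eq, or_iff_left hne]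

end BoundedSteps

lemma finite_setOf_exists_apply_eq {X ι Y : Type*} [TopologicalSpace X] [CompactSpace X]
    [TopologicalSpace Y] [DiscreteTopology Y] {f : ι → X → Y} (hcont : ∀ i, Continuous (f i))
    (hbij : ∀ x, Bijective fun i => f i x) (y : Y) : {i | ∃ x, f i x = y}.Finite := by
  obtain ⟨t, ht⟩ := isCompact_univ.elim_finite_subcover (fun i => f i ⁻¹' {y})
    (fun i => (isOpen_discrete _).preimage (hcont i))
    (fun x _ => mem_iUnion.2 ((hbij x).2 y))
  refine t.finite_toSet.subset ?_
  rintro i ⟨x, hx⟩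
  obtain ⟨j, hj, hjx⟩ := mem_iUnion₂.1 (ht (mem_univ x))
  rwa [(hbij x).1 (hx.trans hjx.symm)]

lemma exists_forall_lt_abs {X : Type*} [TopologicalSpace X] [CompactSpace X] {f : ℤ → X → ℤ}
    (hcont : ∀ n, Continuous (f n)) (hbij : ∀ x, Bijective fun n => f n x) (C : ℤ) :
    ∃ N : ℕ, 0 < N ∧ ∀ x n, (N : ℤ) < |n| → C < |f n x| := by
  have hfin : (⋃ v ∈ Icc (-C) C, {n | ∃ x, f n x = v}).Finite :=
    (finite_Icc _ _).biUnion fun v _ => finite_setOf_exists_apply_eq hcont hbij v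
  obtain ⟨B, hB⟩ := (hfin.image Int.natAbs).bddAbove
  refine ⟨B + 1, B.succ_pos, fun x n hn => not_le.1 fun hle => ?_⟩
  have : n.natAbs ≤ B := hB ⟨n, mem_iUnion₂.2 ⟨f n x, mem_Icc.2 (abs_le.1 hle), x, rfl⟩, rfl⟩
  rw [Int.abs_eq_natAbs] at hn
  omega

theorem statement_16_general (X : Type) [TopologicalSpace X] [CompactSpace X]
    (σ : X ≃ₜ X) (f : ℤ → X → ℤ)
    (hcont : ∀ n : ℤ, Continuous (f n))
    (hcoc : ∀ (m n : ℤ) (x : X), f (m + n) x = f m x + f n ((σ.toEquiv ^ m) x))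
    (hbij : ∀ x : X, Function.Bijective fun n : ℤ => f n x) :
    ∃ N : ℕ, 0 < N ∧
      ∀ X₁ X₂ : Set X,
        X₁ = {x | ∀ n : ℤ, (N : ℤ) < n → 0 < f n x ∧ f (-n) x < 0} →
        X₂ = {x | ∀ n : ℤ, (N : ℤ) < n → f n x < 0 ∧ 0 < f (-n) x} →
        IsClopen X₁ ∧ IsClopen X₂ ∧
        Set.MapsTo σ X₁ X₁ ∧ Set.MapsTo σ X₂ X₂ ∧
        X₁ ∪ X₂ = Set.univ ∧ X₁ ∩ X₂ = ∅ := by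
  obtain ⟨C, hC⟩ := (isCompact_range (continuous_abs.comp (hcont 1))).bddAbove
  have hstep : ∀ x n, |f (n + 1) x - f n x| ≤ C := fun x n => by
    rw [hcoc, add_sub_cancel_left]
    exact hC (mem_range_self _)
  obtain ⟨N, hN, hesc⟩ := exists_forall_lt_abs hcont hbij C
  have hσ : ∀ x, 0 < f (N + 1) (σ x) ↔ 0 < f (N + 1) x := fun x => by
    have hshift : |f (N + 1) (σ x) - f (N + 1 + 1) x| ≤ C := by
      rw [show (N : ℤ) + 1 + 1 = 1 + (N + 1) by ring, hcoc 1 _ x, zpow_one,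
        Homeomorph.coe_toEquiv, sub_add_cancel_right, abs_neg]
      exact hC (mem_range_self _)
    exact (pos_iff_pos_of_abs_sub_le hshift (hesc (σ x) _ (lt_abs.2 (.inl (by omega))))).symm.trans
      (pos_iff_pos_of_lt (hstep x) (hesc x) (by omega))
  refine ⟨N, hN, ?_⟩
  rintro X₁ X₂ rfl rfl
  have hX₁ : {x | ∀ n : ℤ, (N : ℤ) < n → 0 < f n x ∧ f (-n) x < 0} = {x | 0 < f (N + 1) x} :=
    ext fun x => forall_tail_pos_iff (hbij x).2 (hstep x) (hesc x)
  have hX₂ : {x | ∀ n : ℤ, (N : ℤ) < n → f n x < 0 ∧ 0 < f (-n) x} = {x | 0 < f (N + 1) x}ᶜ :=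
    ext fun x => forall_tail_neg_iff (hbij x).2 (hstep x) (hesc x)
  have hclopen : IsClopen {x | 0 < f (N + 1) x} := (isClopen_discrete (Ioi 0)).preimage (hcont _)
  rw [hX₁, hX₂]
  exact ⟨hclopen, hclopen.compl, fun x hx => (hσ x).2 hx, fun x hx h => hx ((hσ x).1 h),
    union_compl_self _, inter_compl_self _⟩

theorem statement_16 (X : Type) [TopologicalSpace X] [CompactSpace X] [T2Space X]
    (σ : X ≃ₜ X) (f : ℤ → X → ℤ)
    (hcont : ∀ n : ℤ, Continuous (f n))
    (hcoc : ∀ (m n : ℤ) (x : X), f (m + n) x = f m x + f n ((σ.toEquiv ^ m) x))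
    (hbij : ∀ x : X, Function.Bijective fun n : ℤ => f n x) :
    ∃ N : ℕ, 0 < N ∧
      ∀ X₁ X₂ : Set X,
        X₁ = {x | ∀ n : ℤ, (N : ℤ) < n → 0 < f n x ∧ f (-n) x < 0} →
        X₂ = {x | ∀ n : ℤ, (N : ℤ) < n → f n x < 0 ∧ 0 < f (-n) x} →
        IsClopen X₁ ∧ IsClopen X₂ ∧
        Set.MapsTo σ X₁ X₁ ∧ Set.MapsTo σ X₂ X₂ ∧
        X₁ ∪ X₂ = Set.univ ∧ X₁ ∩ X₂ = ∅ :=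
  statement_16_general X σ f hcont hcoc hbij
end
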